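/- arXiv:1909.05924 — 8 statements merged into one kernel-verified Lean document; each statement's English description precedes it below -/
import Mathlib

section
/- For every path-connected topological space X and every n ≥ 2, the bidirectional topological complexity is bounded above by the symmetrized topological complexity: TC^β_n(X) ≤ TC^Σ_n(X). -/
open unitInterval

noncomputable section

/-- The point `j/(n-1)` of the unit interval, for `j : Fin n`.
These are the `n` evaluation points `0, 1/(n-1), …, (n-2)/(n-1), 1`. -/
def evalPt (n : ℕ) (j : Fin n) : unitInterval :=
  ⟨(j : ℝ) / ((n : ℝ) - 1), by
    have hn : 1 ≤ n := j.pos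
    rcases eq_or_lt_of_le hn with h | h
    · have hn1 : n = 1 := h.symm
      subst hn1
      simp [Fin.fin_one_eq_zero j]
    · have h1 : (0 : ℝ) < (n : ℝ) - 1 := by
        have : (1 : ℝ) < (n : ℝ) := by exact_mod_cast h
        linarith
      constructor
      · exact div_nonneg (Nat.cast_nonneg _) h1.le
      · rw [div_le_one h1]
        have hj : (j : ℕ) + 1 ≤ n := j.is_lt
        have : ((j : ℕ) : ℝ) + 1 ≤ (n : ℝ) := by exact_mod_cast hj
        linarith⟩

/-- Coordinate reversal (the involution `β`) on `n`-tuples: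
`β·(x_1,…,x_n) = (x_n,…,x_1)`. -/
def rtuple {X : Type*} {n : ℕ} (x : Fin n → X) : Fin n → X := fun j => x j.rev

/-- Path reversal (the involution `β`) on the free path space `C(I,X)`:
`(β·γ)(t) = γ(1-t)`. -/
def rpath {X : Type*} [TopologicalSpace X] (γ : C(unitInterval, X)) : C(unitInterval, X) :=
  γ.comp ⟨unitInterval.symm, unitInterval.continuous_symm⟩

/-- `X^n` can be covered by `k` open sets, on each of which there is a continuous
section of the evaluation map `e_n : C(I,X) → X^n`,
`γ ↦ (γ(0), γ(1/(n-1)), …, γ(1))`. -/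
def HasPlanners (X : Type*) [TopologicalSpace X] (n k : ℕ) : Prop :=
  ∃ U : Fin k → Set (Fin n → X),
    (∀ i, IsOpen (U i)) ∧ (⋃ i, U i) = Set.univ ∧
    (∀ i, ∃ s : C(U i, C(unitInterval, X)),
      ∀ x : U i, ∀ j : Fin n, s x (evalPt n j) = (x : Fin n → X) j)

/-- The `n`-th (ordinary, higher) topological complexity `TC_n(X)`, as a value in `ℕ∞`. -/
def TCn (X : Type*) [TopologicalSpace X] (n : ℕ) : ℕ∞ :=
  sInf {k : ℕ∞ | ∃ m : ℕ, (m : ℕ∞) = k ∧ HasPlanners X n m}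

/-- `X^n` can be covered by `k` β-invariant open sets, on each of which there is a
continuous β-equivariant section of the evaluation map `e_n : C(I,X) → X^n`
(a bidirectional motion planner). -/
def HasBidirPlanners (X : Type*) [TopologicalSpace X] (n k : ℕ) : Prop :=
  ∃ U : Fin k → Set (Fin n → X),
    (∀ i, IsOpen (U i)) ∧ (⋃ i, U i) = Set.univ ∧
    (∀ i, ∀ x ∈ U i, rtuple x ∈ U i) ∧
    (∀ i, ∃ s : C(U i, C(unitInterval, X)),
      (∀ x : U i, ∀ j : Fin n, s x (evalPt n j) = (x : Fin n → X) j) ∧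
      (∀ x : U i, ∀ hx : rtuple (x : Fin n → X) ∈ U i,
        s ⟨rtuple (x : Fin n → X), hx⟩ = rpath (s x)))

/-- The `n`-th bidirectional topological complexity `TC^β_n(X)`, as a value in `ℕ∞`. -/
def TCbeta (X : Type*) [TopologicalSpace X] (n : ℕ) : ℕ∞ :=
  sInf {k : ℕ∞ | ∃ m : ℕ, (m : ℕ∞) = k ∧ HasBidirPlanners X n m}

/-- The action of a permutation `sg ∈ Σ_n` on `n`-tuples (by permuting coordinates). -/
def permTuple {X : Type*} {n : ℕ} (sg : Equiv.Perm (Fin n)) (x : Fin n → X) : Fin n → X :=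
  fun j => x (sg j)

/-- `X^n` can be covered by `k` `Σ_n`-invariant open sets, on each of which there is a
continuous `Σ_n`-equivariant section of `E_n : X^{J_n} → X^n`,
`(α_1,…,α_n) ↦ (α_1(1),…,α_n(1))`, where `X^{J_n}` is the space of `n`-tuples of paths
with a common initial point. -/
def HasSymPlanners (X : Type*) [TopologicalSpace X] (n k : ℕ) : Prop :=
  ∃ U : Fin k → Set (Fin n → X),
    (∀ i, IsOpen (U i)) ∧ (⋃ i, U i) = Set.univ ∧
    (∀ i, ∀ sg : Equiv.Perm (Fin n), ∀ x ∈ U i, permTuple sg x ∈ U i) ∧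
    (∀ i, ∃ s : C(U i, Fin n → C(unitInterval, X)),
      (∀ x : U i, ∀ j j' : Fin n, s x j 0 = s x j' 0) ∧
      (∀ x : U i, ∀ j : Fin n, s x j 1 = (x : Fin n → X) j) ∧
      (∀ x : U i, ∀ sg : Equiv.Perm (Fin n),
        ∀ hx : permTuple sg (x : Fin n → X) ∈ U i,
        s ⟨permTuple sg (x : Fin n → X), hx⟩ = permTuple sg (s x)))

/-- The `n`-th symmetrized topological complexity `TC^Σ_n(X)`, as a value in `ℕ∞`. -/
def TCsym (X : Type*) [TopologicalSpace X] (n : ℕ) : ℕ∞ :=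
  sInf {k : ℕ∞ | ∃ m : ℕ, (m : ℕ∞) = k ∧ HasSymPlanners X n m}

/-- The unit sphere `S^m ⊂ ℝ^{m+1}`. -/
abbrev Sph (m : ℕ) : Type :=
  Metric.sphere (0 : EuclideanSpace ℝ (Fin (m + 1))) 1

end

/-!
Given `n` paths `α_0, …, α_{n-1}` issuing from a common point `c` and ending at the `x_j`, the
zig-zag path runs `x_0 → c → x_1 → c → ⋯ → c → x_{n-1}`: rescaling `I` to `[0, n-1]`, on the
window `[j - 1/2, j + 1/2]` it follows `α_j` backwards to `c` and forwards again, with apex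
`x_j` at the evaluation point `j`. Reversing the path reverses the order of the windows, so a
`Σ_n`-equivariant family of path tuples, being in particular equivariant under `j ↦ n-1-j`,
yields a `β`-equivariant family of zig-zag paths.
-/

open Set

noncomputable section Zigzag

variable {n : ℕ}

def rescale (n : ℕ) (t : I) : ℝ := t * (n - 1)

lemma continuous_rescale : Continuous (rescale n) := by
  unfold rescale; fun_prop

lemma rescale_evalPt (j : Fin n) : rescale n (evalPt n j) = j := by
  rcases eq_or_ne ((n : ℝ) - 1) 0 with h | h
  · have hn : n = 1 := by exact_mod_cast sub_eq_zero.1 h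
    have hj : (j : ℕ) = 0 := by have := j.is_lt; omega
    simp [rescale, h, hj]
  · exact div_mul_cancel₀ _ h

lemma Fin.cast_val_rev {R : Type*} [CommRing R] (j : Fin n) :
    ((j.rev : ℕ) : R) = (n - 1) - j := by
  rw [Fin.val_rev, Nat.cast_sub j.is_lt]
  push_cast; ring

lemma abs_rescale_symm_sub_rev (t : I) (j : Fin n) :
    |rescale n (σ t) - j.rev| = |rescale n t - j| := by
  rw [← abs_neg, rescale, rescale, coe_symm_eq, Fin.cast_val_rev]
  ring_nf

def toothSet (n : ℕ) (j : Fin n) : Set I := {t | |rescale n t - j| ≤ 1 / 2}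

lemma isClosed_toothSet (j : Fin n) : IsClosed (toothSet n j) :=
  isClosed_le (by have := continuous_rescale (n := n); fun_prop) continuous_const

lemma exists_mem_toothSet [NeZero n] (t : I) : ∃ j, t ∈ toothSet n j := by
  have hn : (1 : ℝ) ≤ n := by exact_mod_cast NeZero.one_le
  have h0 : 0 ≤ rescale n t := mul_nonneg t.2.1 (by linarith)
  have h1 : rescale n t ≤ n - 1 := mul_le_of_le_one_left (by linarith) t.2.2
  have hfl := Nat.floor_le (a := rescale n t + 1 / 2) (by linarith)
  have hfl' := Nat.lt_floor_add_one (rescale n t + 1 / 2)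
  have hlt : ⌊rescale n t + 1 / 2⌋₊ < n := by
    have : (⌊rescale n t + 1 / 2⌋₊ : ℝ) < n := by linarith
    exact_mod_cast this
  refine ⟨⟨_, hlt⟩, ?_⟩
  change |rescale n t - ⌊rescale n t + 1 / 2⌋₊| ≤ 1 / 2
  rw [abs_le]
  constructor <;> linarith

lemma symm_mem_toothSet_rev {t : I} {j : Fin n} (ht : t ∈ toothSet n j) :
    σ t ∈ toothSet n j.rev := by
  change |rescale n (σ t) - (j.rev : ℕ)| ≤ 1 / 2
  rwa [abs_rescale_symm_sub_rev]

def tooth (n : ℕ) (j : Fin n) (t : I) : I :=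
  projIcc 0 1 zero_le_one (1 - 2 * |rescale n t - j|)

lemma continuous_tooth (j : Fin n) : Continuous (tooth n j) :=
  continuous_projIcc.comp (by have := continuous_rescale (n := n); fun_prop)

lemma tooth_evalPt (j : Fin n) : tooth n j (evalPt n j) = 1 := by
  simp [tooth, rescale_evalPt]

lemma tooth_symm_rev (t : I) (j : Fin n) : tooth n j.rev (σ t) = tooth n j t := by
  rw [tooth, tooth, abs_rescale_symm_sub_rev]

lemma tooth_eq_zero_of_mem_of_mem {t : I} {j j' : Fin n} (hne : j ≠ j')
    (hj : t ∈ toothSet n j) (hj' : t ∈ toothSet n j') : tooth n j t = 0 := by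
  have hsep : (1 : ℝ) ≤ |(j : ℝ) - j'| := by
    have : (1 : ℤ) ≤ |(j : ℤ) - j'| :=
      Int.one_le_abs (sub_ne_zero.2 (by exact_mod_cast Fin.val_ne_of_ne hne))
    exact_mod_cast this
  have htri : |(j : ℝ) - j'| ≤ |rescale n t - j| + |rescale n t - j'| := by
    simpa [abs_sub_comm] using abs_sub_le (j : ℝ) (rescale n t) j'
  have hwide : (1 : ℝ) ≤ 2 * |rescale n t - j| := by
    change |rescale n t - j| ≤ 1 / 2 at hj
    change |rescale n t - j'| ≤ 1 / 2 at hj'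
    linarith
  exact Subtype.ext (by simp [tooth, projIcc_of_le_left, hwide])

variable {X : Type*} [TopologicalSpace X]

/-- Windows overlap only at their endpoints, where every tooth vanishes, so the choice of
window is irrelevant once the paths share their initial point. -/
def zigzagFun [NeZero n] (α : Fin n → C(I, X)) (t : I) : X :=
  α (exists_mem_toothSet t).choose (tooth n (exists_mem_toothSet t).choose t)

lemma zigzagFun_eq_of_mem [NeZero n] {α : Fin n → C(I, X)} (hα : ∀ j j', α j 0 = α j' 0)
    {t : I} {j : Fin n} (ht : t ∈ toothSet n j) : zigzagFun α t = α j (tooth n j t) := by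
  have hchoose := (exists_mem_toothSet (n := n) t).choose_spec
  by_cases h : (exists_mem_toothSet (n := n) t).choose = j
  · rw [zigzagFun, h]
  · rw [zigzagFun, tooth_eq_zero_of_mem_of_mem h hchoose ht,
      tooth_eq_zero_of_mem_of_mem (Ne.symm h) ht hchoose, hα]

variable {Y : Type*} [TopologicalSpace Y]

lemma continuous_zigzagFun [NeZero n] (α : C(Y, Fin n → C(I, X)))
    (hα : ∀ y j j', α y j 0 = α y j' 0) :
    Continuous fun p : Y × I => zigzagFun (α p.1) p.2 := by
  refine (locallyFinite_of_finite fun j => Prod.snd ⁻¹' toothSet n j).continuous ?_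
    (fun j => (isClosed_toothSet j).preimage continuous_snd) fun j => ?_
  · exact iUnion_eq_univ_iff.2 fun p => exists_mem_toothSet p.2
  · have hα_j : Continuous fun p : Y × I => α p.1 j :=
      (continuous_apply j).comp (α.continuous.comp continuous_fst)
    exact (hα_j.eval ((continuous_tooth j).comp continuous_snd)).continuousOn.congr
      fun p hp => zigzagFun_eq_of_mem (hα p.1) hp

def zigzag [NeZero n] (α : C(Y, Fin n → C(I, X))) (hα : ∀ y j j', α y j 0 = α y j' 0) :
    C(Y, C(I, X)) :=
  ContinuousMap.curry ⟨_, continuous_zigzagFun α hα⟩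

lemma zigzag_apply_evalPt [NeZero n] (α : C(Y, Fin n → C(I, X)))
    (hα : ∀ y j j', α y j 0 = α y j' 0) (y : Y) (j : Fin n) :
    zigzag α hα y (evalPt n j) = α y j 1 := by
  have hmem : evalPt n j ∈ toothSet n j := by simp [toothSet, rescale_evalPt]
  rw [zigzag, ContinuousMap.curry_apply, ContinuousMap.coe_mk, zigzagFun_eq_of_mem (hα y) hmem,
    tooth_evalPt]

lemma zigzag_eq_rpath [NeZero n] (α : C(Y, Fin n → C(I, X)))
    (hα : ∀ y j j', α y j 0 = α y j' 0) {y y' : Y} (hyy' : ∀ j, α y' j = α y j.rev) :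
    zigzag α hα y' = rpath (zigzag α hα y) := by
  ext t
  obtain ⟨j, ht⟩ := exists_mem_toothSet (n := n) t
  change zigzagFun (α y') t = zigzagFun (α y) (σ t)
  rw [zigzagFun_eq_of_mem (hα y') ht, zigzagFun_eq_of_mem (hα y) (symm_mem_toothSet_rev ht),
    hyy', tooth_symm_rev]

end Zigzag

theorem HasSymPlanners.hasBidirPlanners {X : Type*} [TopologicalSpace X] {n m : ℕ} [NeZero n]
    (h : HasSymPlanners X n m) : HasBidirPlanners X n m := by
  obtain ⟨U, hopen, hcov, hinv, hsec⟩ := h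
  refine ⟨U, hopen, hcov, fun i x hx => hinv i Fin.revPerm x hx, fun i => ?_⟩
  obtain ⟨s, hstart, hend, hequiv⟩ := hsec i
  refine ⟨zigzag s hstart, fun x j => by rw [zigzag_apply_evalPt, hend], fun x hx => ?_⟩
  refine zigzag_eq_rpath s hstart fun j => ?_
  rw [show (⟨rtuple x, hx⟩ : U i) = ⟨permTuple Fin.revPerm x, hx⟩ from rfl,
    hequiv x Fin.revPerm hx]
  rfl

theorem TCbeta_le_TCsym_general (X : Type*) [TopologicalSpace X]
    (n : ℕ) (hn : 2 ≤ n) :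
    TCbeta X n ≤ TCsym X n := by
  have : NeZero n := ⟨by omega⟩
  exact sInf_le_sInf fun _ ⟨m, hm, h⟩ => ⟨m, hm, h.hasBidirPlanners⟩

/-- For every path-connected space `X` and every `n ≥ 2`,
`TC^β_n(X) ≤ TC^Σ_n(X)`. -/
theorem TCbeta_le_TCsym (X : Type*) [TopologicalSpace X] [PathConnectedSpace X]
    (n : ℕ) (hn : 2 ≤ n) :
    TCbeta X n ≤ TCsym X n :=
  TCbeta_le_TCsym_general X n hn
end

section
/- Bidirectional topological complexity is a homotopy invariant: if X and Y are path-connected topological spaces that are homotopy equivalent, then TC^β_n(X) = TC^β_n(Y) for every n ≥ 2. -/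
open unitInterval

/-!
Let `f : X → Y` have a left homotopy inverse `g`, with `H : g ∘ f ≃ id`. A β-equivariant
planner `s` on `U ⊆ Yⁿ` pulls back to `(fⁿ)⁻¹ U`: on the `j`-th segment `[t_j, t_{j+1}]`
the new path runs `H` backwards from `x_j` to `g (f x_j)`, then `g ∘ s (f x)` from `t_j` to
`t_{j+1}`, then `H` forwards to `x_{j+1}`. Reversing both the tuple and the path maps this
construction on segment `j` to the reversed construction on segment `n - 2 - j`, so the new
planner is again equivariant. Hence `TC^β_n(X) ≤ TC^β_n(Y)`, and symmetrically `≥`.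
-/

open Set

noncomputable section

section GlueSegments

variable {X : Type*} {N : ℕ}

def segmentIndex (N : ℕ) (w : ℝ) : Fin (N + 1) :=
  ⟨min N ⌊w⌋₊, Nat.lt_succ_of_le (min_le_left _ _)⟩

def glueSegments (p : Fin (N + 1) → ℝ → X) (w : ℝ) : X :=
  p (segmentIndex N w) (w - segmentIndex N w)

lemma segmentIndex_of_mem_Ico {j : Fin (N + 1)} {w : ℝ} (hw : w ∈ Ico (j : ℝ) (j + 1)) :
    segmentIndex N w = j := by
  have hfloor : ⌊w⌋₊ = j := (Nat.floor_eq_iff ((Nat.cast_nonneg _).trans hw.1)).2 hw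
  ext
  simp [segmentIndex, hfloor, j.is_le]

lemma mem_Icc_segmentIndex {w : ℝ} (hw : w ∈ Icc 0 ((N : ℝ) + 1)) :
    w ∈ Icc (segmentIndex N w : ℝ) (segmentIndex N w + 1) := by
  rcases le_or_gt ⌊w⌋₊ N with h | h
  · have hidx : (segmentIndex N w : ℕ) = ⌊w⌋₊ := min_eq_right h
    rw [hidx]
    exact ⟨Nat.floor_le hw.1, (Nat.lt_floor_add_one w).le⟩
  · have hidx : (segmentIndex N w : ℕ) = N := min_eq_left h.le
    rw [hidx]
    exact ⟨(Nat.cast_le.2 h.le).trans (Nat.floor_le hw.1), hw.2⟩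

lemma glueSegments_zero (p : Fin (N + 1) → ℝ → X) : glueSegments p 0 = p 0 0 := by
  simp [glueSegments, segmentIndex]

lemma glueSegments_last (p : Fin (N + 1) → ℝ → X) :
    glueSegments p (N + 1) = p (Fin.last N) 1 := by
  have hidx : segmentIndex N (N + 1) = Fin.last N := by
    have hfloor : ⌊(N : ℝ) + 1⌋₊ = N + 1 := by exact_mod_cast Nat.floor_natCast (N + 1)
    ext
    simp [segmentIndex, hfloor]
  simp [glueSegments, hidx]

variable {p : Fin (N + 1) → ℝ → X}

lemma glueSegments_of_mem_Icc (hp : ∀ j : Fin N, p j.castSucc 1 = p j.succ 0)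
    (j : Fin (N + 1)) {w : ℝ} (hw : w ∈ Icc (j : ℝ) (j + 1)) :
    glueSegments p w = p j (w - j) := by
  rcases hw.2.lt_or_eq with hlt | rfl
  · rw [glueSegments, segmentIndex_of_mem_Ico ⟨hw.1, hlt⟩]
  · induction j using Fin.lastCases with
    | last => simpa using glueSegments_last p
    | cast i =>
      have hidx : segmentIndex N ((i.castSucc : ℝ) + 1) = i.succ :=
        segmentIndex_of_mem_Ico (by simp)
      rw [glueSegments, hidx]
      simpa using (hp i).symm

lemma glueSegments_natCast (hp : ∀ j : Fin N, p j.castSucc 1 = p j.succ 0) (j : Fin (N + 1)) :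
    glueSegments p j = p j 0 := by
  simpa using glueSegments_of_mem_Icc hp j (w := j) (by simp)

lemma natCast_val_rev (j : Fin (N + 1)) : ((j.rev : ℕ) : ℝ) = N - j := by
  rw [Fin.val_rev, Nat.cast_sub (by omega)]
  push_cast
  ring

lemma glueSegments_reverse {q : Fin (N + 1) → ℝ → X}
    (hp : ∀ j : Fin N, p j.castSucc 1 = p j.succ 0) (hq : ∀ j : Fin N, q j.castSucc 1 = q j.succ 0)
    (hpq : ∀ j, ∀ u ∈ Icc (0 : ℝ) 1, q j.rev (1 - u) = p j u)
    {w : ℝ} (hw : w ∈ Icc 0 ((N : ℝ) + 1)) :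
    glueSegments q (N + 1 - w) = glueSegments p w := by
  set j := segmentIndex N w
  have hj := mem_Icc_segmentIndex hw
  have hrev := natCast_val_rev j
  have hj' : (N : ℝ) + 1 - w ∈ Icc (j.rev : ℝ) (j.rev + 1) := by
    rw [hrev]
    constructor <;> linarith [hj.1, hj.2]
  rw [glueSegments_of_mem_Icc hp j hj, glueSegments_of_mem_Icc hq j.rev hj',
    ← hpq j _ ⟨by linarith [hj.1], by linarith [hj.2]⟩]
  congr 1
  rw [hrev]
  ring

lemma continuousOn_glueSegments {Z : Type*} [TopologicalSpace Z] [TopologicalSpace X]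
    {p : Fin (N + 1) → Z → ℝ → X} (hp : ∀ z, ∀ j : Fin N, p j.castSucc z 1 = p j.succ z 0)
    (hcont : ∀ j, ContinuousOn (fun q : Z × ℝ => p j q.1 q.2) (univ ×ˢ Icc 0 1)) :
    ContinuousOn (fun q : Z × ℝ => glueSegments (p · q.1) q.2)
      (univ ×ˢ Icc 0 ((N : ℝ) + 1)) := by
  have hcover : (univ : Set Z) ×ˢ Icc 0 ((N : ℝ) + 1) =
      ⋃ j : Fin (N + 1), (univ : Set Z) ×ˢ Icc (j : ℝ) (j + 1) := by
    ext ⟨z, w⟩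
    simp only [mem_prod, mem_univ, true_and, mem_iUnion]
    refine ⟨fun hw => ⟨_, mem_Icc_segmentIndex hw⟩, fun ⟨j, hj⟩ => ⟨?_, ?_⟩⟩
    · linarith [hj.1, (Nat.cast_nonneg (j : ℕ) : (0 : ℝ) ≤ j)]
    · linarith [hj.2, (Nat.cast_le.2 j.is_le : ((j : ℕ) : ℝ) ≤ N)]
  rw [hcover]
  refine (locallyFinite_of_finite _).continuousOn_iUnion
    (fun j => isClosed_univ.prod isClosed_Icc) fun j => ?_
  have hshift : ContinuousOn (fun q : Z × ℝ => p j q.1 (q.2 - j)) (univ ×ˢ Icc (j : ℝ) (j + 1)) :=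
    (hcont j).comp (f := fun q : Z × ℝ => (q.1, q.2 - j)) (by fun_prop)
      fun q hq => ⟨trivial, by linarith [hq.2.1], by linarith [hq.2.2]⟩
  exact hshift.congr fun q hq => glueSegments_of_mem_Icc (hp q.1) j hq.2

end GlueSegments

section PathCorrection

variable {X Y : Type*} [TopologicalSpace X] [TopologicalSpace Y] {N : ℕ}
  {f : C(X, Y)} {g : C(Y, X)} (H : (g.comp f).Homotopy (ContinuousMap.id X))

lemma coe_evalPt (j : Fin (N + 2)) : (evalPt (N + 2) j : ℝ) = j / (N + 1) := by
  have hN : ((N + 2 : ℕ) : ℝ) - 1 = N + 1 := by push_cast; ring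
  rw [evalPt, Subtype.coe_mk, hN]

lemma projIcc_div_eq_evalPt (j : Fin (N + 2)) :
    projIcc 0 1 zero_le_one ((j : ℝ) / (N + 1)) = evalPt (N + 2) j := by
  rw [← coe_evalPt]
  exact projIcc_val zero_le_one _

def correctionPieces (x : Fin (N + 2) → X) (γ : C(I, Y)) (j : Fin (N + 1)) :
    Fin 3 → ℝ → X :=
  ![fun v => H (projIcc 0 1 zero_le_one (1 - v), x j.castSucc),
    fun v => g (γ (projIcc 0 1 zero_le_one ((j + v) / (N + 1)))),
    fun v => H (projIcc 0 1 zero_le_one v, x j.succ)]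

def correctionSegment (x : Fin (N + 2) → X) (γ : C(I, Y)) (j : Fin (N + 1)) (u : ℝ) : X :=
  glueSegments (correctionPieces H x γ j) (3 * u)

def correctedPath (x : Fin (N + 2) → X) (γ : C(I, Y)) (w : ℝ) : X :=
  glueSegments (correctionSegment H x γ) w

variable {H}

lemma correctionPieces_compat {x : Fin (N + 2) → X} {γ : C(I, Y)}
    (hγ : ∀ j, γ (evalPt (N + 2) j) = f (x j)) (j : Fin (N + 1)) (i : Fin 2) :
    correctionPieces H x γ j i.castSucc 1 = correctionPieces H x γ j i.succ 0 := by
  fin_cases i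
  · simpa [correctionPieces, ← hγ] using congrArg (g ∘ γ) (projIcc_div_eq_evalPt j.castSucc).symm
  · simpa [correctionPieces, ← hγ, add_comm] using
      congrArg (g ∘ γ) (projIcc_div_eq_evalPt j.succ)

lemma correctionSegment_zero (x : Fin (N + 2) → X) (γ : C(I, Y)) (j : Fin (N + 1)) :
    correctionSegment H x γ j 0 = x j.castSucc := by
  simp [correctionSegment, glueSegments_zero, correctionPieces]

lemma correctionSegment_one (x : Fin (N + 2) → X) (γ : C(I, Y)) (j : Fin (N + 1)) :
    correctionSegment H x γ j 1 = x j.succ := by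
  have h3 : (3 : ℝ) * 1 = (2 : ℕ) + 1 := by norm_num
  rw [correctionSegment, h3, glueSegments_last]
  simp [correctionPieces]

lemma correctionSegment_compat (x : Fin (N + 2) → X) (γ : C(I, Y)) (j : Fin N) :
    correctionSegment H x γ j.castSucc 1 = correctionSegment H x γ j.succ 0 := by
  rw [correctionSegment_one, correctionSegment_zero, Fin.succ_castSucc]

lemma correctedPath_natCast (x : Fin (N + 2) → X) (γ : C(I, Y)) (j : Fin (N + 2)) :
    correctedPath H x γ j = x j := by
  induction j using Fin.lastCases with
  | last => simpa [correctedPath] using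
      (glueSegments_last (correctionSegment H x γ)).trans (correctionSegment_one x γ _)
  | cast i => simpa [correctedPath] using
      (glueSegments_natCast (correctionSegment_compat x γ) i).trans (correctionSegment_zero x γ i)

lemma continuousOn_correctedPath {Z : Type*} [TopologicalSpace Z] {x : Z → Fin (N + 2) → X}
    {γ : Z → C(I, Y)} (hx : Continuous x) (hγc : Continuous γ)
    (hγ : ∀ z j, γ z (evalPt (N + 2) j) = f (x z j)) :
    ContinuousOn (fun q : Z × ℝ => correctedPath H (x q.1) (γ q.1) q.2)
      (univ ×ˢ Icc 0 ((N : ℝ) + 1)) := by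
  refine continuousOn_glueSegments (p := fun j z => correctionSegment H (x z) (γ z) j)
    (fun z => correctionSegment_compat (x z) (γ z)) fun j => ?_
  have hpieces : ∀ i, ContinuousOn (fun q : Z × ℝ => correctionPieces H (x q.1) (γ q.1) j i q.2)
      (univ ×ˢ Icc 0 1) := by
    intro i
    apply Continuous.continuousOn
    fin_cases i <;> simp [correctionPieces] <;> fun_prop
  have hglue := continuousOn_glueSegments (p := fun i z => correctionPieces H (x z) (γ z) j i)
    (fun z => correctionPieces_compat (hγ z) j) hpieces
  exact hglue.comp (f := fun q : Z × ℝ => (q.1, 3 * q.2)) (by fun_prop) fun q hq =>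
    ⟨trivial, by linarith [hq.2.1], by norm_num; linarith [hq.2.2]⟩

lemma rpath_evalPt (γ : C(I, Y)) (j : Fin (N + 2)) :
    rpath γ (evalPt (N + 2) j) = γ (evalPt (N + 2) j.rev) := by
  simp only [rpath, ContinuousMap.comp_apply, ContinuousMap.coe_mk]
  rw [← projIcc_div_eq_evalPt, ← projIcc_div_eq_evalPt, symm_projIcc, natCast_val_rev]
  congr 2
  field_simp
  push_cast
  ring

lemma correctionPieces_reverse (x : Fin (N + 2) → X) (γ : C(I, Y)) (j : Fin (N + 1))
    (i : Fin 3) (v : ℝ) :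
    correctionPieces H (rtuple x) (rpath γ) j.rev i.rev (1 - v) =
      correctionPieces H x γ j i v := by
  fin_cases i
  · simp [correctionPieces, rtuple, Fin.rev_succ]
  · simp [correctionPieces, rpath, Nat.cast_sub (Nat.le_of_lt_succ j.is_lt)]
    congr 3
    field_simp
    ring
  · simp [correctionPieces, rtuple, Fin.rev_castSucc]

lemma correctionSegment_reverse {x : Fin (N + 2) → X} {γ : C(I, Y)}
    (hγ : ∀ j, γ (evalPt (N + 2) j) = f (x j)) (j : Fin (N + 1)) {u : ℝ}
    (hu : u ∈ Icc (0 : ℝ) 1) :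
    correctionSegment H (rtuple x) (rpath γ) j.rev (1 - u) = correctionSegment H x γ j u := by
  have hγ' : ∀ j, rpath γ (evalPt (N + 2) j) = f (rtuple x j) := fun j =>
    (rpath_evalPt γ j).trans (hγ j.rev)
  have h3 : 3 * (1 - u) = ((2 : ℕ) : ℝ) + 1 - 3 * u := by push_cast; ring
  rw [correctionSegment, correctionSegment, h3]
  exact glueSegments_reverse (correctionPieces_compat hγ j) (correctionPieces_compat hγ' j.rev)
    (fun i v _ => correctionPieces_reverse x γ j i v)
    ⟨by linarith [hu.1], by norm_num; linarith [hu.2]⟩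

lemma correctedPath_reverse {x : Fin (N + 2) → X} {γ : C(I, Y)}
    (hγ : ∀ j, γ (evalPt (N + 2) j) = f (x j)) {w : ℝ} (hw : w ∈ Icc 0 ((N : ℝ) + 1)) :
    correctedPath H (rtuple x) (rpath γ) (N + 1 - w) = correctedPath H x γ w :=
  glueSegments_reverse (correctionSegment_compat x γ) (correctionSegment_compat _ _)
    (fun j _ hu => correctionSegment_reverse hγ j hu) hw

end PathCorrection

section BidirPlanners

variable {X Y : Type*} [TopologicalSpace X] [TopologicalSpace Y]

def IsBidirSection {n : ℕ} (U : Set (Fin n → X)) (s : C(U, C(I, X))) : Prop :=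
  (∀ x : U, ∀ j, s x (evalPt n j) = (x : Fin n → X) j) ∧
    ∀ x : U, ∀ hx : rtuple (x : Fin n → X) ∈ U, s ⟨rtuple x, hx⟩ = rpath (s x)

lemma IsBidirSection.exists_preimage {N : ℕ} {f : C(X, Y)} {g : C(Y, X)}
    (H : (g.comp f).Homotopy (ContinuousMap.id X)) {U : Set (Fin (N + 2) → Y)}
    {s : C(U, C(I, Y))} (hs : IsBidirSection U s) :
    ∃ s' : C((f ∘ ·) ⁻¹' U, C(I, X)), IsBidirSection ((f ∘ ·) ⁻¹' U) s' := by
  set V : Set (Fin (N + 2) → X) := (f ∘ ·) ⁻¹' U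
  let ρ : C(V, U) := ⟨fun v => ⟨f ∘ v, v.2⟩,
    (continuous_pi fun j => f.continuous.comp ((continuous_apply j).comp continuous_subtype_val)
      ).subtype_mk _⟩
  let γ : V → C(I, Y) := fun v => s (ρ v)
  have hγ : ∀ v j, γ v (evalPt (N + 2) j) = f ((v : Fin (N + 2) → X) j) := fun v => hs.1 (ρ v)
  have hcont : Continuous fun q : V × I =>
      correctedPath H (q.1 : Fin (N + 2) → X) (γ q.1) ((N + 1) * q.2) :=
    (continuousOn_correctedPath continuous_subtype_val (s.continuous.comp ρ.continuous) hγ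
      ).comp_continuous (f := fun q : V × I => (q.1, ((N : ℝ) + 1) * q.2)) (by fun_prop)
        fun q => ⟨trivial, by have := q.2.2.1; positivity, by nlinarith [q.2.2.1, q.2.2.2]⟩
  refine ⟨(ContinuousMap.mk _ hcont).curry, fun v j => ?_, fun v hv => ?_⟩
  · change correctedPath H _ (γ v) ((N + 1) * evalPt (N + 2) j) = _
    rw [coe_evalPt, mul_div_cancel₀ _ (by positivity), correctedPath_natCast]
  · have hsym : γ ⟨rtuple v, hv⟩ = rpath (γ v) := hs.2 (ρ v) hv
    ext t
    have ht : ((N : ℝ) + 1) * (σ t : ℝ) ∈ Icc 0 ((N : ℝ) + 1) :=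
      ⟨by have := (σ t).2.1; positivity, by nlinarith [(σ t).2.1, (σ t).2.2]⟩
    change correctedPath H _ (γ ⟨rtuple v, hv⟩) ((N + 1) * t) =
      correctedPath H _ (γ v) ((N + 1) * σ t)
    rw [hsym, ← correctedPath_reverse (hγ v) ht, coe_symm_eq]
    congr 1
    ring

lemma HasBidirPlanners.of_comp_homotopic_id {N k : ℕ} {f : C(X, Y)} {g : C(Y, X)}
    (hgf : (g.comp f).Homotopic (ContinuousMap.id X)) (h : HasBidirPlanners Y (N + 2) k) :
    HasBidirPlanners X (N + 2) k := by
  obtain ⟨H⟩ := hgf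
  obtain ⟨U, hUo, hUc, hUinv, hUs⟩ := h
  have hf : Continuous fun x : Fin (N + 2) → X => f ∘ x :=
    continuous_pi fun j => f.continuous.comp (continuous_apply j)
  refine ⟨fun i => (f ∘ ·) ⁻¹' U i, fun i => (hUo i).preimage hf, ?_,
    fun i x hx => hUinv i _ hx, fun i => ?_⟩
  · rw [← preimage_iUnion, hUc, preimage_univ]
  · obtain ⟨s, hs⟩ := hUs i
    exact IsBidirSection.exists_preimage H hs

end BidirPlanners

end

theorem TCbeta_homotopy_invariant_general (X Y : Type*) [TopologicalSpace X] [TopologicalSpace Y]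
    (h : Nonempty (ContinuousMap.HomotopyEquiv X Y)) (n : ℕ) (hn : 2 ≤ n) :
    TCbeta X n = TCbeta Y n := by
  obtain ⟨E⟩ := h
  obtain ⟨N, rfl⟩ : ∃ N, n = N + 2 := ⟨n - 2, by omega⟩
  have hplanners : ∀ k, HasBidirPlanners X (N + 2) k ↔ HasBidirPlanners Y (N + 2) k := fun k =>
    ⟨.of_comp_homotopic_id E.right_inv, .of_comp_homotopic_id E.left_inv⟩
  simp only [TCbeta, hplanners]

/-- Bidirectional topological complexity is a homotopy invariant:
if `X` and `Y` are path-connected and homotopy equivalent, then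
`TC^β_n(X) = TC^β_n(Y)` for every `n ≥ 2`. -/
theorem TCbeta_homotopy_invariant (X Y : Type*) [TopologicalSpace X] [TopologicalSpace Y]
    [PathConnectedSpace X] [PathConnectedSpace Y]
    (h : Nonempty (ContinuousMap.HomotopyEquiv X Y)) (n : ℕ) (hn : 2 ≤ n) :
    TCbeta X n = TCbeta Y n :=
  TCbeta_homotopy_invariant_general X Y h n hn
end

section
/- For every path-connected topological space X and every n ≥ 1, TC^β_{2n}(X) ≤ TC^β_{2n+1}(X). -/
open unitInterval

/-!
Insert a basepoint `p` as the middle coordinate, `X^{2n} → X^{2n+1}`,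
`x ↦ (x_1, …, x_n, p, x_{n+1}, …, x_{2n})`; this commutes with reversal. Pulling a bidirectional
motion planner for `X^{2n+1}` back along it and precomposing its paths with a reparametrization
of `I` that commutes with `t ↦ 1 - t` and sends the `2n` evaluation points of `e_{2n}` to the
evaluation points of `e_{2n+1}` other than `1/2` gives a bidirectional planner for `X^{2n}`.
-/

open Set

section Reindex

variable {X : Type*} [TopologicalSpace X]

theorem HasBidirPlanners.of_reindex {m n k : ℕ} (f : C(Fin m → X, Fin n → X))
    (hf : ∀ x, f (rtuple x) = rtuple (f x)) (r : C(I, I)) (hr : ∀ t, r (σ t) = σ (r t))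
    (e : Fin m → Fin n) (hre : ∀ j, r (evalPt m j) = evalPt n (e j))
    (hfe : ∀ x j, f x (e j) = x j) (h : HasBidirPlanners X n k) :
    HasBidirPlanners X m k := by
  obtain ⟨U, hU_open, hU_cover, hU_rev, hU_sec⟩ := h
  refine ⟨fun i => f ⁻¹' U i, fun i => (hU_open i).preimage f.continuous, ?_,
    fun i x hx => ?_, fun i => ?_⟩
  · rw [← preimage_iUnion, hU_cover, preimage_univ]
  · simpa only [mem_preimage, hf] using hU_rev i _ hx
  obtain ⟨s, hs_eval, hs_rev⟩ := hU_sec i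
  refine ⟨(ContinuousMap.compRightContinuousMap X r).comp (s.comp (f.restrictPreimage (U i))),
    fun x j => ?_, fun x hx => ?_⟩
  · simpa [hre] using (hs_eval _ (e j)).trans (hfe x j)
  · have hfx : (⟨f (rtuple x), hx⟩ : U i) = ⟨rtuple (f x), hf x ▸ hx⟩ := Subtype.ext (hf x)
    change (s ⟨f (rtuple x), hx⟩).comp r = rpath ((s ⟨f x, x.2⟩).comp r)
    rw [hfx, hs_rev ⟨f x, x.2⟩]
    ext t
    simp [rpath, hr]

theorem TCbeta_le_TCbeta_of_hasBidirPlanners {m n : ℕ}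
    (h : ∀ k, HasBidirPlanners X n k → HasBidirPlanners X m k) :
    TCbeta X m ≤ TCbeta X n :=
  sInf_le_sInf fun _ ⟨k, hk, hn⟩ => ⟨k, hk, h k hn⟩

end Reindex

theorem rtuple_insertNth {X : Type*} {n : ℕ} (i : Fin (n + 1)) (p : X) (x : Fin n → X) :
    rtuple (i.insertNth p x) = i.rev.insertNth p (rtuple x) :=
  Fin.insertNth_comp_rev i p x

def midFin (n : ℕ) : Fin (2 * n + 1) := ⟨n, by omega⟩

theorem midFin_rev (n : ℕ) : (midFin n).rev = midFin n := by
  ext; simp only [midFin, Fin.val_rev]; omega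

theorem val_succAbove_midFin (n : ℕ) (j : Fin (2 * n)) :
    ((midFin n).succAbove j : ℕ) = if (j : ℕ) < n then (j : ℕ) else (j : ℕ) + 1 := by
  split_ifs with h
  · rw [Fin.succAbove_of_castSucc_lt _ _ h, Fin.val_castSucc]
  · rw [Fin.succAbove_of_le_castSucc _ _ (not_lt.1 h), Fin.val_succ]

/-- Piecewise linear, with slope `(2n-1)/(2n)` except on the middle gap
`[(n-1)/(2n-1), n/(2n-1)]`, which it stretches so as to jump over the point `1/2`: it sends
`j/(2n-1)` to `j/(2n)` for `j < n` and to `(j+1)/(2n)` for `j ≥ n`. -/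
noncomputable def midStretchReal (n : ℕ) (t : ℝ) : ℝ :=
  (t * (2 * n - 1) + projIcc (0 : ℝ) 1 zero_le_one (t * (2 * n - 1) - (n - 1))) / (2 * n)

section MidStretch

variable {n : ℕ}

@[fun_prop]
theorem continuous_midStretchReal : Continuous (midStretchReal n) := by
  unfold midStretchReal; fun_prop

theorem midStretchReal_one_sub (hn : 0 < n) (t : ℝ) :
    midStretchReal n (1 - t) = 1 - midStretchReal n t := by
  have hc := congrArg Subtype.val (unitInterval.symm_projIcc (t * (2 * n - 1) - (n - 1)))
  rw [unitInterval.coe_symm_eq] at hc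
  have h2n : (2 * n : ℝ) ≠ 0 := by positivity
  unfold midStretchReal
  field_simp
  rw [show (1 - t) * (2 * n - 1) - (n - 1) = 1 - (t * (2 * n - 1) - (n - 1)) by ring, ← hc]
  ring

theorem midStretchReal_mem (hn : 0 < n) {t : ℝ} (ht : t ∈ I) : midStretchReal n t ∈ I := by
  have hn' : (1 : ℝ) ≤ n := by exact_mod_cast hn
  obtain ⟨hc0, hc1⟩ := (projIcc (0 : ℝ) 1 zero_le_one (t * (2 * n - 1) - (n - 1))).2
  obtain ⟨ht0, ht1⟩ := ht
  unfold midStretchReal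
  constructor
  · exact div_nonneg (by nlinarith) (by positivity)
  · rw [div_le_one (by positivity)]; nlinarith

theorem midStretchReal_div (hn : 0 < n) (j : ℕ) :
    midStretchReal n (j / (2 * n - 1)) = (if j < n then j else j + 1 : ℕ) / (2 * n) := by
  have hn' : (1 : ℝ) ≤ n := by exact_mod_cast hn
  unfold midStretchReal
  rw [div_mul_cancel₀ _ (by linarith)]
  congr 1
  split_ifs with h
  · rw [projIcc_of_le_left]
    · simp
    · have : (j : ℝ) + 1 ≤ n := by exact_mod_cast h
      linarith
  · rw [projIcc_of_right_le]
    · simp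
    · have : (n : ℝ) ≤ j := by exact_mod_cast not_lt.1 h
      linarith

noncomputable def midStretch (hn : 0 < n) : C(I, I) :=
  ⟨fun t => ⟨midStretchReal n t, midStretchReal_mem hn t.2⟩, by fun_prop⟩

theorem midStretch_symm (hn : 0 < n) (t : I) : midStretch hn (σ t) = σ (midStretch hn t) :=
  Subtype.ext (midStretchReal_one_sub hn t)

theorem midStretch_evalPt (hn : 0 < n) (j : Fin (2 * n)) :
    midStretch hn (evalPt (2 * n) j) = evalPt (2 * n + 1) ((midFin n).succAbove j) := by
  apply Subtype.ext
  change midStretchReal n (j / ((2 * n : ℕ) - 1))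
    = ((midFin n).succAbove j : ℕ) / ((2 * n + 1 : ℕ) - 1)
  rw [val_succAbove_midFin]
  push_cast
  rw [midStretchReal_div hn]
  push_cast
  ring_nf

end MidStretch

/-- For every path-connected space `X` and every `n ≥ 1`,
`TC^β_{2n}(X) ≤ TC^β_{2n+1}(X)`. -/
theorem TCbeta_even_le_odd (X : Type*) [TopologicalSpace X] [PathConnectedSpace X]
    (n : ℕ) (hn : 1 ≤ n) :
    TCbeta X (2 * n) ≤ TCbeta X (2 * n + 1) := by
  obtain ⟨p⟩ := PathConnectedSpace.nonempty (X := X)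
  let insertMid : C(Fin (2 * n) → X, Fin (2 * n + 1) → X) :=
    ⟨fun x => (midFin n).insertNth p x, continuous_const.finInsertNth _ continuous_id⟩
  have insertMid_rtuple (x : Fin (2 * n) → X) : insertMid (rtuple x) = rtuple (insertMid x) := by
    simp only [insertMid, ContinuousMap.coe_mk, rtuple_insertNth, midFin_rev]
  exact TCbeta_le_TCbeta_of_hasBidirPlanners fun k =>
    HasBidirPlanners.of_reindex insertMid insertMid_rtuple (midStretch hn)
      (midStretch_symm hn) _ (midStretch_evalPt hn)
      (fun x j => Fin.insertNth_apply_succAbove (α := fun _ => X) (midFin n) p x j)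
end

section
/- For a CW complex X and n ≥ 2, the symmetrized topological complexity is bounded below by the sectional category of the diagonal inclusion into the n-th symmetric product: TC^Σ_n(X) ≥ secat(Δ : X → SP^n(X)). -/
open unitInterval

noncomputable section

/-- The setoid on `X^n` identifying a tuple with its reversal (the `ℤ/2`-action
generated by `β`). -/
def bpSetoid (X : Type*) (n : ℕ) : Setoid (Fin n → X) where
  r x y := x = y ∨ x = rtuple y
  iseqv := by
    constructor
    · intro x; exact Or.inl rfl
    · intro x y h
      rcases h with h | h
      · exact Or.inl h.symm
      · refine Or.inr ?_
        funext j
        simp [h, rtuple, Fin.rev_rev]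
    · intro x y z h1 h2
      rcases h1 with h1 | h1 <;> rcases h2 with h2 | h2
      · exact Or.inl (h1.trans h2)
      · exact Or.inr (h1.trans h2)
      · subst h1 h2; exact Or.inr rfl
      · subst h1 h2
        refine Or.inl ?_
        funext j
        simp [rtuple, Fin.rev_rev]

/-- The `n`-th bidirectional product `βP^n(X) = X^n/β`. -/
def bP (X : Type*) [TopologicalSpace X] (n : ℕ) : Type _ := Quotient (bpSetoid X n)

instance (X : Type*) [TopologicalSpace X] (n : ℕ) : TopologicalSpace (bP X n) :=
  instTopologicalSpaceQuotient

/-- The setoid on `X^n` identifying tuples in the same `Σ_n`-orbit. -/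
def spSetoid (X : Type*) (n : ℕ) : Setoid (Fin n → X) where
  r x y := ∃ sg : Equiv.Perm (Fin n), x = permTuple sg y
  iseqv := by
    constructor
    · intro x; exact ⟨1, rfl⟩
    · rintro x y ⟨sg, h⟩
      refine ⟨sg⁻¹, ?_⟩
      funext j
      simp [h, permTuple]
    · rintro x y z ⟨sg, h1⟩ ⟨tu, h2⟩
      refine ⟨sg.trans tu, ?_⟩
      funext j
      simp [h1, h2, permTuple]

/-- The `n`-th symmetric product `SP^n(X) = X^n/Σ_n`. -/
def SP (X : Type*) [TopologicalSpace X] (n : ℕ) : Type _ := Quotient (spSetoid X n)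

instance (X : Type*) [TopologicalSpace X] (n : ℕ) : TopologicalSpace (SP X n) :=
  instTopologicalSpaceQuotient

/-- The diagonal inclusion `Δ : X → SP^n(X)`. -/
def diagSP (X : Type*) [TopologicalSpace X] (n : ℕ) : C(X, SP X n) :=
  ⟨fun x => Quotient.mk (spSetoid X n) (fun _ => x),
    Continuous.comp continuous_quotient_mk' (continuous_pi fun _ => continuous_id)⟩

/-- The diagonal inclusion `Δ : X → βP^n(X)`. -/
def diagBP (X : Type*) [TopologicalSpace X] (n : ℕ) : C(X, bP X n) :=
  ⟨fun x => Quotient.mk (bpSetoid X n) (fun _ => x),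
    Continuous.comp continuous_quotient_mk' (continuous_pi fun _ => continuous_id)⟩

/-- The natural map `βP^n(X) → SP^n(X)` induced by the identity of `X^n`. -/
def bpToSp (X : Type*) [TopologicalSpace X] (n : ℕ) : C(bP X n, SP X n) :=
  ⟨Quotient.map' id (fun x y h => by
      rcases h with h | h
      · exact ⟨1, h⟩
      · exact ⟨Fin.revPerm, h⟩),
    Continuous.quotient_map' continuous_id _⟩

/-- The sectional category `secat(f)` of a map `f : A → B`: the smallest `k` such that
`B` is covered by `k` open sets, on each of which there is a continuous map `s` to `A`
with `f ∘ s` homotopic to the inclusion. -/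
def secat {A B : Type*} [TopologicalSpace A] [TopologicalSpace B] (f : C(A, B)) : ℕ∞ :=
  sInf {k : ℕ∞ | ∃ m : ℕ, (m : ℕ∞) = k ∧
    ∃ U : Fin m → Set B,
      (∀ i, IsOpen (U i)) ∧ (⋃ i, U i) = Set.univ ∧
      (∀ i, ∃ s : C(U i, A),
        (f.comp s).Homotopic ⟨Subtype.val, continuous_subtype_val⟩)}

end

universe u

/-! The structures `RelativeCWComplex` / `CWComplex` of Mathlib (December 2024,
`Mathlib/Topology/CWComplex.lean`) were removed; they are restated here with their old meaning. -/

namespace CWComplex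

/-- The `(n-1)`-sphere, as a subspace of `ℝ^n`. -/
noncomputable def sphere (n : ℤ) : TopCat.{u} :=
  TopCat.of <| ULift <| Metric.sphere (0 : EuclideanSpace ℝ <| Fin <| Int.toNat <| n + 1) 1

/-- The closed unit disk. -/
noncomputable def closedBall (n : ℤ) : TopCat.{u} :=
  TopCat.of <| ULift <| Metric.closedBall (0 : EuclideanSpace ℝ <| Fin <| Int.toNat <| n + 1) 1

/-- The inclusion of the sphere into the closed disk. -/
noncomputable def sphereInclusion (n : ℤ) : sphere.{u} n ⟶ closedBall.{u} n :=
  TopCat.ofHom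
    ⟨fun p => ⟨⟨p.down.1, le_of_eq p.down.2⟩⟩,
      continuous_uliftUp.comp ((continuous_subtype_val.comp continuous_uliftDown).subtype_mk _)⟩

/-- Attaching generalized cells along `f`. -/
structure AttachGeneralizedCells {S D : TopCat.{u}} (f : S ⟶ D) (X X' : TopCat.{u}) where
  cells : Type u
  attachMaps : cells → (S ⟶ X)
  iso_pushout : X' ≅ CategoryTheory.Limits.pushout (CategoryTheory.Limits.Sigma.desc attachMaps)
    (CategoryTheory.Limits.Sigma.map fun _ => f)

/-- Attaching `n`-cells. -/
def AttachCells (n : ℤ) := AttachGeneralizedCells.{u} (sphereInclusion.{u} n)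

end CWComplex

/-- A relative CW-complex. -/
structure RelativeCWComplex where
  sk : ℕ → TopCat.{u}
  attachCells (n : ℕ) : CWComplex.AttachCells.{u} ((n : ℤ) - 1) (sk n) (sk (n + 1))

/-- A CW-complex: a relative CW-complex whose `sk 0` is empty. -/
structure CWComplex extends RelativeCWComplex.{u} where
  isEmpty_sk_zero : IsEmpty (sk 0)

namespace RelativeCWComplex

/-- The inclusion of the skeletons. -/
noncomputable def skInclusion (X : RelativeCWComplex.{u}) (n : ℕ) : X.sk n ⟶ X.sk (n + 1) :=
  CategoryTheory.CategoryStruct.comp (CategoryTheory.Limits.pushout.inl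
    (CategoryTheory.Limits.Sigma.desc (X.attachCells n).attachMaps)
    (CategoryTheory.Limits.Sigma.map fun _ => CWComplex.sphereInclusion.{u} ((n : ℤ) - 1)))
    (X.attachCells n).iso_pushout.inv

/-- The underlying topological space: the colimit of the skeletons. -/
noncomputable def toTopCat (X : RelativeCWComplex.{u}) : TopCat.{u} :=
  CategoryTheory.Limits.colimit (CategoryTheory.Functor.ofSequence X.skInclusion)

end RelativeCWComplex

/-! A `Σ_n`-equivariant planner `s` on an open set `U ⊆ X^n` is pushed down to the image of `U`
in `SP^n(X)`, which is open because the quotient map `X^n → SP^n(X)` is open. The common initial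
point of the `n` paths gives a map back to `X`, and the `n` paths, read in `SP^n(X)`, form a
homotopy from `Δ` of that map to the inclusion. Equivariance makes both constant on `Σ_n`-orbits,
so they descend along the restricted quotient map. -/

open Topology

theorem IsOpenMap.isOpenQuotientMap_imageFactorization {Y Z : Type*} [TopologicalSpace Y]
    [TopologicalSpace Z] {f : Y → Z} (hf : IsOpenMap f) (hc : Continuous f) {U : Set Y}
    (hU : IsOpen U) : IsOpenQuotientMap (U.imageFactorization f) :=
  ⟨Set.imageFactorization_surjective, hc.subtype_map fun _ => Set.mem_image_of_mem f,
    hf.subtype_map hU fun _ => Set.mem_image_of_mem f⟩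

/-- `p` is assumed open so that `id × p` is again a quotient map. -/
theorem ContinuousMap.Homotopic.of_comp_isOpenQuotientMap {A B Y : Type*} [TopologicalSpace A]
    [TopologicalSpace B] [TopologicalSpace Y] {p : C(A, B)} (hp : IsOpenQuotientMap p)
    {f₀ f₁ : C(B, Y)} (F : (f₀.comp p).Homotopy (f₁.comp p))
    (hF : ∀ t a a', p a = p a' → F (t, a) = F (t, a')) : f₀.Homotopic f₁ := by
  let idp : C(unitInterval × A, unitInterval × B) := (ContinuousMap.id _).prodMap p
  have hq : IsQuotientMap idp := (IsOpenQuotientMap.id.prodMap hp).isQuotientMap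
  have hfac : Function.FactorsThrough F.toContinuousMap idp := by
    rintro ⟨t, a⟩ ⟨t', a'⟩ h
    obtain ⟨rfl, ha⟩ := Prod.ext_iff.mp h
    exact hF t a a' ha
  have hG : ∀ t a, hq.lift F.toContinuousMap hfac (t, p a) = F (t, a) := fun t a =>
    DFunLike.congr_fun (hq.lift_comp F.toContinuousMap hfac) (t, a)
  refine ⟨⟨hq.lift F.toContinuousMap hfac, ?_, ?_⟩⟩ <;>
  · intro b
    obtain ⟨a, rfl⟩ := hp.surjective b
    simp [hG]

section SymmetricProduct

variable {X : Type*} [TopologicalSpace X] {n : ℕ}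

theorem continuous_permTuple (τ : Equiv.Perm (Fin n)) : Continuous (permTuple (X := X) τ) :=
  continuous_pi fun j => continuous_apply (τ j)

theorem isOpenMap_quotient_mk_spSetoid : IsOpenMap (Quotient.mk (spSetoid X n)) := by
  intro W hW
  have hsat : Quotient.mk (spSetoid X n) ⁻¹' (Quotient.mk (spSetoid X n) '' W)
      = ⋃ τ : Equiv.Perm (Fin n), permTuple τ ⁻¹' W := by
    ext y
    simp only [Set.mem_preimage, Set.mem_image, Set.mem_iUnion]
    constructor
    · rintro ⟨x, hx, hxy⟩
      obtain ⟨τ, rfl⟩ := Quotient.exact hxy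
      exact ⟨τ, hx⟩
    · rintro ⟨τ, hτ⟩
      exact ⟨permTuple τ y, hτ, Quotient.eq.mpr ⟨τ, rfl⟩⟩
  refine isQuotientMap_quotient_mk'.isOpen_preimage.mp ?_
  change IsOpen (Quotient.mk (spSetoid X n) ⁻¹' _)
  rw [hsat]
  exact isOpen_iUnion fun τ => hW.preimage (continuous_permTuple τ)

variable {U : Set (Fin n → X)} {s : C(U, Fin n → C(unitInterval, X))}

theorem exists_perm_of_quotient_mk_eq
    (heq : ∀ (x : U) (τ : Equiv.Perm (Fin n)) (hx : permTuple τ (x : Fin n → X) ∈ U),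
      s ⟨permTuple τ (x : Fin n → X), hx⟩ = permTuple τ (s x))
    {x y : U} (h : Quotient.mk (spSetoid X n) (x : Fin n → X) = Quotient.mk (spSetoid X n) y) :
    ∃ τ : Equiv.Perm (Fin n), s x = permTuple τ (s y) := by
  obtain ⟨τ, hτ⟩ := Quotient.exact h
  refine ⟨τ, ?_⟩
  rw [← heq y τ (hτ ▸ x.2)]
  exact congrArg s (Subtype.ext hτ)

theorem exists_homotopic_diagSP_of_symPlanner [NeZero n] (hU : IsOpen U)
    (h0 : ∀ (x : U) (j j' : Fin n), s x j 0 = s x j' 0)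
    (h1 : ∀ (x : U) (j : Fin n), s x j 1 = (x : Fin n → X) j)
    (heq : ∀ (x : U) (τ : Equiv.Perm (Fin n)) (hx : permTuple τ (x : Fin n → X) ∈ U),
      s ⟨permTuple τ (x : Fin n → X), hx⟩ = permTuple τ (s x)) :
    ∃ c : C(Quotient.mk (spSetoid X n) '' U, X),
      ((diagSP X n).comp c).Homotopic ⟨Subtype.val, continuous_subtype_val⟩ := by
  set q := Quotient.mk (spSetoid X n)
  have hp' : IsOpenQuotientMap (U.imageFactorization q) :=
    isOpenMap_quotient_mk_spSetoid.isOpenQuotientMap_imageFactorization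
      continuous_quotient_mk' hU
  let p : C(U, q '' U) := ⟨U.imageFactorization q, hp'.continuous⟩
  have hp : IsOpenQuotientMap p := hp'
  let start : C(U, X) := ⟨fun x => s x 0 0, by fun_prop⟩
  have hstart : Function.FactorsThrough start p := fun x y hxy => by
    obtain ⟨τ, hτ⟩ := exists_perm_of_quotient_mk_eq heq (Subtype.ext_iff.mp hxy)
    simp only [start, ContinuousMap.coe_mk, hτ, permTuple, h0 y (τ 0) 0]
  have hlift : ∀ x, hp.isQuotientMap.lift start hstart (p x) = s x 0 0 := fun x =>
    DFunLike.congr_fun (hp.isQuotientMap.lift_comp start hstart) x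
  refine ⟨hp.isQuotientMap.lift start hstart, .of_comp_isOpenQuotientMap hp
    { toFun := fun tx => q fun j => s tx.2 j tx.1
      continuous_toFun := continuous_quotient_mk'.comp (by fun_prop)
      map_zero_left := fun x => ?_
      map_one_left := fun x => ?_ } ?_⟩
  · simp only [ContinuousMap.comp_apply, hlift]
    exact congrArg q (funext fun j => h0 x j 0)
  · exact congrArg q (funext (h1 x))
  · intro t x y hxy
    obtain ⟨τ, hτ⟩ := exists_perm_of_quotient_mk_eq heq (Subtype.ext_iff.mp hxy)
    exact Quotient.eq.mpr ⟨τ, by rw [hτ]; rfl⟩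

end SymmetricProduct

theorem TCsym_ge_secat_diag_SP_general (X : Type u) [TopologicalSpace X] (n : ℕ) (hn : 2 ≤ n) :
    secat (diagSP X n) ≤ TCsym X n := by
  have : NeZero n := ⟨by omega⟩
  refine sInf_le_sInf ?_
  rintro k ⟨m, rfl, U, hopen, hcov, -, hsec⟩
  refine ⟨m, rfl, fun i => Quotient.mk (spSetoid X n) '' U i,
    fun i => isOpenMap_quotient_mk_spSetoid _ (hopen i), ?_, fun i => ?_⟩
  · change ⋃ i, Quotient.mk (spSetoid X n) '' U i = (Set.univ : Set (Quotient (spSetoid X n)))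
    rw [← Set.image_iUnion, hcov, Set.image_univ_of_surjective Quotient.mk_surjective]
  · obtain ⟨s, h0, h1, heq⟩ := hsec i
    exact exists_homotopic_diagSP_of_symPlanner (hopen i) h0 h1 heq

/-- For a CW complex `X` and `n ≥ 2`,
`TC^Σ_n(X) ≥ secat(Δ : X → SP^n(X))`. -/
theorem TCsym_ge_secat_diag_SP (X : Type u) [TopologicalSpace X] [PathConnectedSpace X]
    (hX : ∃ C : CWComplex.{u}, Nonempty (X ≃ₜ C.toRelativeCWComplex.toTopCat))
    (n : ℕ) (hn : 2 ≤ n) :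
    secat (diagSP X n) ≤ TCsym X n :=
  TCsym_ge_secat_diag_SP_general X n hn
end

section
/- For a CW complex X and n ≥ 2, the bidirectional topological complexity is bounded below by the sectional category of the diagonal inclusion into the n-th bidirectional product: TC^β_n(X) ≥ secat(Δ : X → βP^n(X)). -/
open unitInterval

universe u

/-!
Let `s` be a β-equivariant section of `e_n` over a β-invariant set `U ⊆ X^n`. Since `s (β x)`
is the reverse of the path `s x`, the midpoint `s x (1/2)` depends only on the class of `x` in
`βP^n(X)`, and so does the deformation of `e_n (s x) = x` into the constant tuple at that
midpoint obtained by squeezing the path, `t ↦ s x ((1 - r)/2 + r t)` for `r` from `1` to `0`.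
The quotient map `X^n → βP^n(X)` is open, so its restrictions over subsets and its products
with `I` are quotient maps; hence the midpoint map and the deformation descend to the image of
`U`, where they form a section of `Δ` up to homotopy.
-/

open unitInterval Topology Function

namespace BidirectionalTC

noncomputable def half : I := ⟨1 / 2, by norm_num, by norm_num⟩

lemma symm_half : σ half = half := by
  ext; norm_num [half]

noncomputable def towardsHalf (r t : I) : I :=
  ⟨(1 - r) / 2 + r * t,
    by nlinarith [r.2.1, r.2.2, t.2.1, t.2.2], by nlinarith [r.2.1, r.2.2, t.2.1, t.2.2]⟩

@[simp]
lemma towardsHalf_zero (t : I) : towardsHalf 0 t = half := by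
  ext; norm_num [towardsHalf, half]

@[simp]
lemma towardsHalf_one (t : I) : towardsHalf 1 t = t := by
  ext; simp [towardsHalf]

lemma symm_towardsHalf (r t : I) : σ (towardsHalf r t) = towardsHalf r (σ t) := by
  ext; simp only [coe_symm_eq, towardsHalf]; ring

@[fun_prop]
lemma continuous_towardsHalf : Continuous fun p : I × I => towardsHalf p.1 p.2 := by
  unfold towardsHalf; fun_prop

lemma evalPt_rev {n : ℕ} (hn : n ≠ 1) (j : Fin n) : evalPt n j.rev = σ (evalPt n j) := by
  have hn' : (n : ℝ) - 1 ≠ 0 := sub_ne_zero.2 (by exact_mod_cast hn)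
  ext
  simp only [evalPt, coe_symm_eq, Fin.val_rev]
  rw [Nat.cast_sub j.is_lt]
  field_simp
  push_cast
  ring

def bpMk (X : Type*) [TopologicalSpace X] (n : ℕ) : C(Fin n → X, bP X n) :=
  ⟨Quotient.mk (bpSetoid X n), continuous_quotient_mk'⟩

variable {X : Type*} {n : ℕ}

lemma rtuple_rtuple (x : Fin n → X) : rtuple (rtuple x) = x := by
  funext j; simp [rtuple]

variable [TopologicalSpace X]

lemma continuous_rtuple : Continuous (rtuple : (Fin n → X) → Fin n → X) :=
  continuous_pi fun _ => continuous_apply _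

lemma preimage_image_bpMk (W : Set (Fin n → X)) :
    bpMk X n ⁻¹' (bpMk X n '' W) = W ∪ rtuple ⁻¹' W := by
  ext x
  constructor
  · rintro ⟨y, hy, hyx⟩
    rcases Quotient.exact hyx with rfl | rfl
    exacts [Or.inl hy, Or.inr hy]
  · rintro (hx | hx)
    exacts [⟨x, hx, rfl⟩, ⟨rtuple x, hx, Quotient.sound (Or.inr rfl)⟩]

lemma isOpenQuotientMap_bpMk : IsOpenQuotientMap (bpMk X n) := by
  refine ⟨Quotient.mk_surjective, continuous_quotient_mk', fun W hW => ?_⟩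
  show IsOpen (bpMk X n ⁻¹' (bpMk X n '' W))
  rw [preimage_image_bpMk]
  exact hW.union (hW.preimage continuous_rtuple)

lemma eq_or_eq_rpath_of_bpMk_eq {U : Set (Fin n → X)} (hU : ∀ x ∈ U, rtuple x ∈ U)
    {s : U → C(I, X)} (hβ : ∀ (x : U) (hx : rtuple (x : Fin n → X) ∈ U),
      s ⟨rtuple (x : Fin n → X), hx⟩ = rpath (s x))
    {x y : U} (h : bpMk X n x = bpMk X n y) :
    s x = s y ∨ s x = rpath (s y) := by
  rcases Quotient.exact h with h | h
  · exact Or.inl (congrArg s (Subtype.ext h))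
  · exact Or.inr (by rw [← hβ y (hU _ y.2)]; exact congrArg s (Subtype.ext h))

theorem homotopic_of_isOpenQuotientMap {Y B Z : Type*} [TopologicalSpace Y] [TopologicalSpace B]
    [TopologicalSpace Z] {p : C(Y, B)} (hp : IsOpenQuotientMap p) {f₀ f₁ : C(B, Z)}
    (F : C(I × Y, Z)) (hF : FactorsThrough F (Prod.map id p))
    (h₀ : ∀ y, F (0, y) = f₀ (p y)) (h₁ : ∀ y, F (1, y) = f₁ (p y)) : f₀.Homotopic f₁ := by
  have hq : IsQuotientMap ((ContinuousMap.id I).prodMap p) :=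
    (IsOpenQuotientMap.id.prodMap hp).isQuotientMap
  have hG (r : I) (y : Y) : hq.lift F hF (r, p y) = F (r, y) :=
    DFunLike.congr_fun (hq.lift_comp F hF) (r, y)
  refine ⟨⟨hq.lift F hF, fun b => ?_, fun b => ?_⟩⟩ <;>
  · obtain ⟨y, rfl⟩ := hp.surjective b
    simp [hG, h₀, h₁]

theorem exists_section_homotopic_of_bidirPlanner (hn : n ≠ 1) {U : Set (Fin n → X)}
    (hU : ∀ x ∈ U, rtuple x ∈ U) (s : C(U, C(I, X)))
    (hs : ∀ (x : U) (j : Fin n), s x (evalPt n j) = (x : Fin n → X) j)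
    (hβ : ∀ (x : U) (hx : rtuple (x : Fin n → X) ∈ U),
      s ⟨rtuple (x : Fin n → X), hx⟩ = rpath (s x)) :
    ∃ t : C(bpMk X n '' U, X),
      ((diagBP X n).comp t).Homotopic ⟨Subtype.val, continuous_subtype_val⟩ := by
  set V := bpMk X n '' U
  have hVU : bpMk X n ⁻¹' V ⊆ U := by
    rw [preimage_image_bpMk]
    exact Set.union_subset subset_rfl fun x hx => by simpa [rtuple_rtuple] using hU _ hx
  set p := (bpMk X n).restrictPreimage V
  have hp : IsOpenQuotientMap p := isOpenQuotientMap_bpMk.restrictPreimage V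
  let s' : C(bpMk X n ⁻¹' V, C(I, X)) := s.comp (ContinuousMap.inclusion hVU)
  have hs' (x y : bpMk X n ⁻¹' V) (h : p x = p y) : s' x = s' y ∨ s' x = rpath (s' y) :=
    eq_or_eq_rpath_of_bpMk_eq hU hβ (congrArg Subtype.val h)
  let mid : C(bpMk X n ⁻¹' V, X) := ⟨fun x => s' x half, by fun_prop⟩
  have hmid : FactorsThrough mid p := by
    intro x y h
    rcases hs' x y h with h | h <;> simp [mid, h, rpath, symm_half]
  refine ⟨hp.isQuotientMap.lift mid hmid, homotopic_of_isOpenQuotientMap hp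
    ⟨fun rx => bpMk X n fun j => s' rx.2 (towardsHalf rx.1 (evalPt n j)), by fun_prop⟩ ?_ ?_ ?_⟩
  · rintro ⟨r, x⟩ ⟨r', y⟩ h
    obtain ⟨rfl, h⟩ := Prod.ext_iff.1 h
    rcases hs' x y h with h | h
    · simp [h]
    · refine Quotient.sound (Or.inr (funext fun j => ?_))
      simp [h, rpath, rtuple, symm_towardsHalf, evalPt_rev hn]
  · intro x
    have hlift : hp.isQuotientMap.lift mid hmid (p x) = mid x :=
      DFunLike.congr_fun (hp.isQuotientMap.lift_comp mid hmid) x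
    simp only [ContinuousMap.comp_apply, hlift, ContinuousMap.coe_mk, towardsHalf_zero]
    rfl
  · intro x
    simp only [ContinuousMap.coe_mk, towardsHalf_one, s', ContinuousMap.comp_apply, hs]
    rfl

end BidirectionalTC

theorem TCbeta_ge_secat_diag_bP_general (X : Type u) [TopologicalSpace X]
    (n : ℕ) (hn : 2 ≤ n) :
    secat (diagBP X n) ≤ TCbeta X n := by
  apply sInf_le_sInf
  rintro _ ⟨m, rfl, U, hU_open, hU_cover, hU_inv, hU_planner⟩
  have hq := BidirectionalTC.isOpenQuotientMap_bpMk (X := X) (n := n)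
  refine ⟨m, rfl, fun i => BidirectionalTC.bpMk X n '' U i,
    fun i => hq.isOpenMap _ (hU_open i), ?_, fun i => ?_⟩
  · rw [← Set.image_iUnion, hU_cover, Set.image_univ_of_surjective hq.surjective]
  · obtain ⟨s, hs, hβ⟩ := hU_planner i
    exact BidirectionalTC.exists_section_homotopic_of_bidirPlanner (by omega) (hU_inv i) s hs hβ

/-- For a CW complex `X` and `n ≥ 2`,
`TC^β_n(X) ≥ secat(Δ : X → βP^n(X))`. -/
theorem TCbeta_ge_secat_diag_bP (X : Type u) [TopologicalSpace X] [PathConnectedSpace X]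
    (hX : Nonempty (TopCat.CWComplex.{u} (TopCat.of X)))
    (n : ℕ) (hn : 2 ≤ n) :
    secat (diagBP X n) ≤ TCbeta X n :=
  TCbeta_ge_secat_diag_bP_general X n hn
end

section
/- If n > 1 is odd, then for every topological space X the n-th bidirectional product βP^n(X) is homeomorphic to βP^{n−1}(X) × X. -/
open unitInterval

/-!
Reversal fixes the middle coordinate of `X^(2m+1)`, so
`x ↦ ([x without its middle coordinate], x_m) : X^(2m+1) → βP^(2m)(X) × X` is constant exactly
on the `β`-orbits. It is a quotient map: the projection `X^(2m) → βP^(2m)(X)` is open (the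
saturation of `U` is `U ∪ βU`), and products of open quotient maps are quotient maps.
-/

namespace Homeomorph

def piFinSuccAbove {n : ℕ} (α : Fin (n + 1) → Type*) [∀ i, TopologicalSpace (α i)]
    (p : Fin (n + 1)) : (∀ i, α i) ≃ₜ α p × ∀ j, α (p.succAbove j) where
  toEquiv := (Fin.insertNthEquiv α p).symm
  continuous_toFun := (continuous_apply p).prodMk (continuous_pi fun _ => continuous_apply _)
  continuous_invFun := Continuous.finInsertNth p continuous_fst continuous_snd

end Homeomorph

section BidirectionalProduct

variable {X : Type*} {n : ℕ}

lemma rtuple_removeNth (p : Fin (n + 1)) (x : Fin (n + 1) → X) :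
    rtuple (p.removeNth x) = p.rev.removeNth (rtuple x) := by
  funext j
  simp [rtuple, Fin.removeNth, Fin.rev_succAbove]

lemma preimage_image_bP_mk (U : Set (Fin n → X)) :
    Quotient.mk (bpSetoid X n) ⁻¹' (Quotient.mk (bpSetoid X n) '' U) = U ∪ rtuple ⁻¹' U := by
  ext x
  constructor
  · rintro ⟨y, hy, hyx⟩
    rcases Quotient.exact hyx with rfl | rfl
    exacts [Or.inl hy, Or.inr hy]
  · rintro (hx | hx)
    exacts [⟨x, hx, rfl⟩, ⟨rtuple x, hx, Quotient.sound (Or.inr rfl)⟩]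

lemma bpSetoid_rel_iff_of_rev_eq {p : Fin (n + 1)} (hp : p.rev = p) (x y : Fin (n + 1) → X) :
    bpSetoid X (n + 1) x y ↔ x p = y p ∧ bpSetoid X n (p.removeNth x) (p.removeNth y) := by
  have split (z : Fin (n + 1) → X) : x = z ↔ x p = z p ∧ p.removeNth x = p.removeNth z :=
    (Fin.insertNthEquiv _ p).symm.injective.eq_iff.symm.trans Prod.ext_iff
  have hrev : p.removeNth (rtuple y) = rtuple (p.removeNth y) := by
    rw [rtuple_removeNth, hp]
  have hmid : rtuple y p = y p := by
    simp only [rtuple, hp]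
  change x = y ∨ x = rtuple y ↔ _ ∧ (_ = _ ∨ _ = _)
  rw [split y, split (rtuple y), hrev, hmid]
  tauto

variable [TopologicalSpace X]

lemma continuous_rtuple : Continuous (rtuple : (Fin n → X) → Fin n → X) :=
  continuous_pi fun j => continuous_apply j.rev

lemma isOpenQuotientMap_bP_mk : IsOpenQuotientMap (Quotient.mk (bpSetoid X n)) := by
  refine ⟨Quotient.mk_surjective, continuous_quotient_mk', fun U hU => ?_⟩
  rw [← isQuotientMap_quotient_mk'.isOpen_preimage]
  change IsOpen (Quotient.mk _ ⁻¹' _)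
  rw [preimage_image_bP_mk]
  exact hU.union (hU.preimage continuous_rtuple)

def bPSplitAt (p : Fin (n + 1)) (x : Fin (n + 1) → X) : bP X n × X :=
  (Quotient.mk _ (p.removeNth x), x p)

lemma isQuotientMap_bPSplitAt (p : Fin (n + 1)) :
    Topology.IsQuotientMap (bPSplitAt (X := X) p) :=
  have hsplit : bPSplitAt (X := X) p =
      Prod.map (Quotient.mk _) id ∘ Prod.swap ∘ Homeomorph.piFinSuccAbove _ p := rfl
  hsplit ▸ (isOpenQuotientMap_bP_mk.prodMap .id).isQuotientMap.comp
    ((Homeomorph.prodComm _ _).isQuotientMap.comp (Homeomorph.piFinSuccAbove _ p).isQuotientMap)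

lemma bPSplitAt_eq_iff {p : Fin (n + 1)} (hp : p.rev = p) (x y : Fin (n + 1) → X) :
    bPSplitAt p x = bPSplitAt p y ↔ bpSetoid X (n + 1) x y := by
  rw [bpSetoid_rel_iff_of_rev_eq hp]
  exact Prod.ext_iff.trans (and_comm.trans (and_congr_right' Quotient.eq))

noncomputable def bPSuccHomeomorphOfRevEq (p : Fin (n + 1)) (hp : p.rev = p) :
    bP X (n + 1) ≃ₜ bP X n × X :=
  (Homeomorph.Quotient.congrRight fun x y => (bPSplitAt_eq_iff hp x y).symm).trans
    (Topology.IsQuotientMap.homeomorph (f := ⟨bPSplitAt p, (isQuotientMap_bPSplitAt p).continuous⟩)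
      (isQuotientMap_bPSplitAt p))

end BidirectionalProduct

theorem bP_odd_homeomorph_general (n : ℕ) (hn : Odd n)
    (X : Type*) [TopologicalSpace X] :
    Nonempty (bP X n ≃ₜ bP X (n - 1) × X) := by
  obtain ⟨m, rfl⟩ := hn
  let mid : Fin (2 * m + 1) := ⟨m, by omega⟩
  have hmid : mid.rev = mid := Fin.ext (by simp [mid]; omega)
  rw [Nat.add_sub_cancel]
  exact ⟨bPSuccHomeomorphOfRevEq mid hmid⟩

/-- If `n > 1` is odd, then for every topological space `X`,
`βP^n(X)` is homeomorphic to `βP^{n-1}(X) × X`. -/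
theorem bP_odd_homeomorph (n : ℕ) (hn : Odd n) (h1 : 1 < n)
    (X : Type*) [TopologicalSpace X] :
    Nonempty (bP X n ≃ₜ bP X (n - 1) × X) :=
  bP_odd_homeomorph_general n hn X
end

section
/- For every path-connected topological space X and every l ≥ 1, the second symmetrized topological complexity of X^l is bounded above by the 2l-th bidirectional topological complexity of X: TC^Σ_2(X^l) ≤ TC^β_{2l}(X). -/
open unitInterval

/-! The pair `(y₀, y₁)` of `l`-tuples is sent to the `2l`-tuple `y₀` followed by `y₁` reversed,
an operation that commutes with reversal. A bidirectional planner `γ` through these `2l` points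
yields a path in `X^l` from `y₀` to `y₁`: its `r`-th coordinate follows `γ` along the segment from
`r/(2l-1)` to `1 - r/(2l-1)`. These segments are symmetric about `1/2`, so reversing `γ`
reverses the new path. -/

lemma TCbeta_le_TCbeta {X Y : Type*} [TopologicalSpace X] [TopologicalSpace Y] {m n : ℕ}
    (h : ∀ k, HasBidirPlanners X m k → HasBidirPlanners Y n k) : TCbeta Y n ≤ TCbeta X m :=
  sInf_le_sInf fun _ ⟨k, hk, hXk⟩ => ⟨k, hk, h k hXk⟩

lemma HasBidirPlanners.of_equivariant {X Y : Type*} [TopologicalSpace X] [TopologicalSpace Y]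
    {m n k : ℕ} (φ : C(Fin n → Y, Fin m → X)) (hφ : ∀ y, φ (rtuple y) = rtuple (φ y))
    (Ψ : C(C(I, X), C(I, Y))) (hΨ : ∀ γ, Ψ (rpath γ) = rpath (Ψ γ))
    (heval : ∀ y γ, (∀ j, γ (evalPt m j) = φ y j) → ∀ j, Ψ γ (evalPt n j) = y j)
    (h : HasBidirPlanners X m k) : HasBidirPlanners Y n k := by
  obtain ⟨U, hU_open, hU_cover, hU_inv, hU_sec⟩ := h
  refine ⟨fun i => φ ⁻¹' U i, fun i => (hU_open i).preimage φ.continuous, ?_, ?_, fun i => ?_⟩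
  · rw [← Set.preimage_iUnion, hU_cover, Set.preimage_univ]
  · intro i y hy
    rw [Set.mem_preimage, hφ]
    exact hU_inv i _ hy
  · obtain ⟨s, hs_eval, hs_equiv⟩ := hU_sec i
    refine ⟨Ψ.comp (s.comp (φ.restrictPreimage (U i))), fun y => heval y _ (hs_eval _),
      fun y hy => ?_⟩
    have hφy : (⟨φ (rtuple y), hy⟩ : U i) = ⟨rtuple (φ y), hφ y ▸ hy⟩ := Subtype.ext (hφ y)
    change Ψ (s ⟨φ (rtuple y), hy⟩) = rpath (Ψ (s ⟨φ y, y.2⟩))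
    rw [hφy, ← hΨ]
    exact congrArg Ψ (hs_equiv ⟨φ y, y.2⟩ _)

lemma evalPt_zero (n : ℕ) : evalPt (n + 1) 0 = 0 :=
  Subtype.ext (by simp [evalPt])

lemma evalPt_rev {n : ℕ} (hn : 2 ≤ n) (j : Fin n) : evalPt n j.rev = σ (evalPt n j) := by
  have hn' : ((n : ℝ) - 1) ≠ 0 := by
    have : (2 : ℝ) ≤ n := by exact_mod_cast hn
    linarith
  apply Subtype.ext
  simp only [evalPt, coe_symm_eq, Fin.val_rev]
  rw [Nat.cast_sub (by omega : (j : ℕ) + 1 ≤ n)]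
  field_simp
  push_cast
  ring

lemma symm_convexComb (x y t : I) :
    σ (Set.Icc.convexComb x y t) = Set.Icc.convexComb (σ x) (σ y) t :=
  Subtype.ext (by simp only [coe_symm_eq, Set.Icc.coe_convexComb]; ring)

section Paths

variable {X : Type*} [TopologicalSpace X]

def pathsAlong {ι : Type*} (τ : ι → C(I, I)) : C(C(I, X), C(I, ι → X)) :=
  ContinuousMap.curry ⟨fun p r => p.1 (τ r p.2), by fun_prop⟩

@[simp]
lemma pathsAlong_apply {ι : Type*} (τ : ι → C(I, I)) (γ : C(I, X)) (t : I) (r : ι) :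
    pathsAlong τ γ t r = γ (τ r t) :=
  rfl

lemma pathsAlong_rpath {ι : Type*} {τ : ι → C(I, I)} (hτ : ∀ r t, τ r (σ t) = σ (τ r t))
    (γ : C(I, X)) : pathsAlong τ (rpath γ) = rpath (pathsAlong τ γ) := by
  ext t r
  simp [rpath, hτ]

end Paths

section Doubling

variable {X : Type*} [TopologicalSpace X] (l : ℕ)

def appendRev : C(Fin 2 → Fin l → X, Fin (l + l) → X) :=
  ⟨fun y => Fin.append (y 0) (rtuple (y 1)), by
    refine continuous_pi fun j => ?_
    induction j using Fin.addCases <;> simp only [Fin.append_left, Fin.append_right, rtuple] <;>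
      fun_prop⟩

variable {l}

lemma appendRev_castAdd (y : Fin 2 → Fin l → X) (r : Fin l) :
    appendRev l y (Fin.castAdd l r) = y 0 r :=
  Fin.append_left _ _ _

lemma appendRev_rev_castAdd (y : Fin 2 → Fin l → X) (r : Fin l) :
    appendRev l y (Fin.castAdd l r).rev = y 1 r := by
  simp only [appendRev, ContinuousMap.coe_mk, Fin.rev_castAdd, ← Fin.natAdd_eq_addNat,
    Fin.append_right, rtuple, Fin.rev_rev]

lemma appendRev_rtuple (y : Fin 2 → Fin l → X) :
    appendRev l (rtuple y) = rtuple (appendRev l y) := by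
  ext j
  simp only [appendRev, ContinuousMap.coe_mk, rtuple, Fin.append_rev, Fin.cast_eq_self,
    Function.comp_def, Fin.rev_rev]
  rfl

variable (l)

noncomputable def doublingSegment (r : Fin l) : C(I, I) :=
  ⟨Set.Icc.convexComb (evalPt (l + l) (Fin.castAdd l r)) (σ (evalPt (l + l) (Fin.castAdd l r))),
    Set.Icc.continuous_convexComb _ _⟩

lemma doublingSegment_symm (r : Fin l) (t : I) :
    doublingSegment l r (σ t) = σ (doublingSegment l r t) := by
  simp only [doublingSegment, ContinuousMap.coe_mk, Set.Icc.convexComb_symm, symm_convexComb,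
    symm_symm]

lemma pathsAlong_doublingSegment_evalPt (y : Fin 2 → Fin l → X) (γ : C(I, X))
    (hγ : ∀ j, γ (evalPt (l + l) j) = appendRev l y j) (j : Fin 2) :
    pathsAlong (doublingSegment l) γ (evalPt 2 j) = y j := by
  ext r
  have hl : 2 ≤ l + l := by have := r.pos; omega
  have h1 : evalPt 2 1 = 1 := by rw [show (1 : Fin 2) = Fin.rev 0 from rfl, evalPt_rev le_rfl,
    evalPt_zero, symm_zero]
  fin_cases j
  · simp [doublingSegment, evalPt_zero, hγ, appendRev_castAdd]
  · simp [doublingSegment, h1, ← evalPt_rev hl, hγ, appendRev_rev_castAdd]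

end Doubling

theorem TCsym2_pow_le_TCbeta_general (X : Type*) [TopologicalSpace X] (l : ℕ) :
    TCbeta (Fin l → X) 2 ≤ TCbeta X (2 * l) := by
  rw [two_mul]
  exact TCbeta_le_TCbeta fun _ => HasBidirPlanners.of_equivariant (appendRev l)
    appendRev_rtuple (pathsAlong (doublingSegment l)) (pathsAlong_rpath (doublingSegment_symm l))
    (pathsAlong_doublingSegment_evalPt l)

/-- For every path-connected space `X` and every `l ≥ 1`,
`TC^Σ_2(X^l) ≤ TC^β_{2l}(X)`, where `TC^Σ_2(Y)` of a space `Y` is the number of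
swap-invariant open sets covering `Y × Y` admitting swap-equivariant sections of
`e_2`, i.e. `TC^β_2(Y)`. -/
theorem TCsym2_pow_le_TCbeta (X : Type*) [TopologicalSpace X] [PathConnectedSpace X]
    (l : ℕ) (hl : 1 ≤ l) :
    TCbeta (Fin l → X) 2 ≤ TCbeta X (2 * l) :=
  TCsym2_pow_le_TCbeta_general X l
end

section
/- For every path-connected topological space X, the second bidirectional topological complexity agrees with the second symmetrized topological complexity: TC^β_2(X) = TC^Σ_2(X). -/
open unitInterval

/-!
For `n = 2`, invariance under `Σ₂` is invariance under `β`, so both kinds of planners live on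
the same covers and only their sections need comparing. A path `γ` from `x₀` to `x₁` splits at
its midpoint into the pair of paths `t ↦ γ ((1 ∓ t) / 2)` issuing from `γ (1/2)` and ending at
`x₀`, `x₁`; conversely, a pair of paths with a common source is joined into the reverse of the
first followed by the second. Both operations are continuous and carry path reversal to the swap
of the pair, so each turns an equivariant section of one kind into one of the other.
-/

noncomputable section

variable {X : Type*} [TopologicalSpace X]

lemma Equiv.Perm.forall_fin_two {p : Equiv.Perm (Fin 2) → Prop} :
    (∀ sg, p sg) ↔ p 1 ∧ p (Equiv.swap 0 1) := by
  refine ⟨fun h => ⟨h _, h _⟩, fun ⟨h1, hswap⟩ sg => ?_⟩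
  obtain rfl | rfl : sg = 1 ∨ sg = Equiv.swap 0 1 := by revert sg; decide
  exacts [h1, hswap]

@[simp]
lemma permTuple_one {Y : Type*} {n : ℕ} (x : Fin n → Y) : permTuple 1 x = x := rfl

@[simp]
lemma permTuple_swap_zero_one {Y : Type*} (x : Fin 2 → Y) :
    permTuple (Equiv.swap 0 1) x = rtuple x := by
  funext j; fin_cases j <;> rfl

lemma forall_permTuple_mem_iff {Y : Type*} (U : Set (Fin 2 → Y)) :
    (∀ sg : Equiv.Perm (Fin 2), ∀ x ∈ U, permTuple sg x ∈ U) ↔ ∀ x ∈ U, rtuple x ∈ U := by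
  simp [Equiv.Perm.forall_fin_two]

lemma forall_permTuple_equivariant_iff {Y Z : Type*} {U : Set (Fin 2 → Y)}
    (s : U → Fin 2 → Z) :
    (∀ x : U, ∀ sg : Equiv.Perm (Fin 2), ∀ hx : permTuple sg (x : Fin 2 → Y) ∈ U,
      s ⟨permTuple sg x, hx⟩ = permTuple sg (s x)) ↔
    ∀ x : U, ∀ hx : rtuple (x : Fin 2 → Y) ∈ U,
      s ⟨rtuple x, hx⟩ = rtuple (s x) := by
  simp [Equiv.Perm.forall_fin_two]

@[simp]
lemma evalPt_two_zero : evalPt 2 0 = 0 := Subtype.ext (by norm_num [evalPt])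

@[simp]
lemma evalPt_two_one : evalPt 2 1 = 1 := Subtype.ext (by norm_num [evalPt])

@[simp]
lemma rpath_apply (γ : C(I, X)) (t : I) : rpath γ t = γ (σ t) := rfl

@[simp]
lemma rpath_rpath (γ : C(I, X)) : rpath (rpath γ) = γ := by
  ext; simp

lemma continuous_rpath : Continuous (rpath : C(I, X) → C(I, X)) :=
  ContinuousMap.continuous_precomp _

def upperHalf : C(I, I) where
  toFun t := ⟨(1 + t) / 2, by constructor <;> linarith [t.2.1, t.2.2]⟩
  continuous_toFun := by apply Continuous.subtype_mk; fun_prop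

@[simp]
lemma symm_upperHalf_zero : σ (upperHalf 0) = upperHalf 0 :=
  Subtype.ext (by norm_num [upperHalf])

@[simp]
lemma upperHalf_one : upperHalf 1 = 1 :=
  Subtype.ext (by norm_num [upperHalf])

def splitAtHalf (γ : C(I, X)) : Fin 2 → C(I, X) :=
  ![(rpath γ).comp upperHalf, γ.comp upperHalf]

lemma continuous_splitAtHalf : Continuous (splitAtHalf : C(I, X) → Fin 2 → C(I, X)) :=
  continuous_pi fun j => by
    fin_cases j
    exacts [(ContinuousMap.continuous_precomp _).comp continuous_rpath,
      ContinuousMap.continuous_precomp _]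

lemma splitAtHalf_apply_zero (γ : C(I, X)) (j : Fin 2) :
    splitAtHalf γ j 0 = γ (upperHalf 0) := by
  fin_cases j <;> simp [splitAtHalf]

lemma splitAtHalf_apply_one (γ : C(I, X)) (j : Fin 2) :
    splitAtHalf γ j 1 = γ (evalPt 2 j) := by
  fin_cases j <;> simp [splitAtHalf]

lemma splitAtHalf_rpath (γ : C(I, X)) : splitAtHalf (rpath γ) = rtuple (splitAtHalf γ) := by
  funext j; fin_cases j <;> simp [splitAtHalf, rtuple]

variable (X) in
def commonSourcePairs : Set (Fin 2 → C(I, X)) := {a | a 0 0 = a 1 0}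

lemma rtuple_mem_commonSourcePairs {a : Fin 2 → C(I, X)} (ha : a ∈ commonSourcePairs X) :
    rtuple a ∈ commonSourcePairs X :=
  ha.symm

def joinPath (a : commonSourcePairs X) : Path (a.1 0 1) (a.1 1 1) :=
  (⟨a.1 0, rfl, rfl⟩ : Path (a.1 0 0) (a.1 0 1)).symm.trans ⟨a.1 1, a.2.symm, rfl⟩

lemma continuous_uncurry_joinPath : Continuous ↿(joinPath (X := X)) :=
  have hcoord (j : Fin 2) :
      Continuous fun p : commonSourcePairs X × I => p.1.1 j p.2 :=
    ContinuousEval.continuous_eval.comp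
      (((continuous_apply j).comp (continuous_subtype_val.comp continuous_fst)).prodMk
        continuous_snd)
  Path.trans_continuous_family _ (Path.symm_continuous_family _ (hcoord 0)) _
    (hcoord 1)

def joinMap : C(commonSourcePairs X, C(I, X)) :=
  ContinuousMap.curry ⟨↿joinPath, continuous_uncurry_joinPath⟩

@[simp]
lemma joinMap_apply (a : commonSourcePairs X) (t : I) : joinMap a t = joinPath a t := rfl

lemma joinMap_apply_evalPt (a : commonSourcePairs X) (j : Fin 2) :
    joinMap a (evalPt 2 j) = a.1 j 1 := by
  fin_cases j <;> simp

lemma joinMap_rtuple (a : commonSourcePairs X) :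
    joinMap ⟨rtuple a.1, rtuple_mem_commonSourcePairs a.2⟩ = rpath (joinMap a) := by
  ext t
  show joinPath _ t = (joinPath a).symm t
  unfold joinPath
  rw [Path.trans_symm, Path.symm_symm]
  rfl

variable {U : Set (Fin 2 → X)}

lemma exists_symSection_of_bidirSection (s : C(U, C(I, X)))
    (hs : ∀ x : U, ∀ j : Fin 2, s x (evalPt 2 j) = (x : Fin 2 → X) j)
    (hβ : ∀ x : U, ∀ hx : rtuple (x : Fin 2 → X) ∈ U, s ⟨rtuple x, hx⟩ = rpath (s x)) :
    ∃ s' : C(U, Fin 2 → C(I, X)),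
      (∀ x : U, ∀ j j' : Fin 2, s' x j 0 = s' x j' 0) ∧
      (∀ x : U, ∀ j : Fin 2, s' x j 1 = (x : Fin 2 → X) j) ∧
      (∀ x : U, ∀ sg : Equiv.Perm (Fin 2), ∀ hx : permTuple sg (x : Fin 2 → X) ∈ U,
        s' ⟨permTuple sg x, hx⟩ = permTuple sg (s' x)) :=
  ⟨⟨splitAtHalf ∘ s, continuous_splitAtHalf.comp s.continuous⟩,
    fun x j j' => by simp [splitAtHalf_apply_zero],
    fun x j => by simp [splitAtHalf_apply_one, hs],
    (forall_permTuple_equivariant_iff _).2 fun x hx => by simp [hβ, splitAtHalf_rpath]⟩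

lemma exists_bidirSection_of_symSection (s : C(U, Fin 2 → C(I, X)))
    (h₀ : ∀ x : U, ∀ j j' : Fin 2, s x j 0 = s x j' 0)
    (h₁ : ∀ x : U, ∀ j : Fin 2, s x j 1 = (x : Fin 2 → X) j)
    (hσ : ∀ x : U, ∀ sg : Equiv.Perm (Fin 2), ∀ hx : permTuple sg (x : Fin 2 → X) ∈ U,
        s ⟨permTuple sg x, hx⟩ = permTuple sg (s x)) :
    ∃ s' : C(U, C(I, X)),
      (∀ x : U, ∀ j : Fin 2, s' x (evalPt 2 j) = (x : Fin 2 → X) j) ∧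
      (∀ x : U, ∀ hx : rtuple (x : Fin 2 → X) ∈ U, s' ⟨rtuple x, hx⟩ = rpath (s' x)) := by
  let pairs : C(U, commonSourcePairs X) := ⟨fun x => ⟨s x, h₀ x 0 1⟩, by fun_prop⟩
  refine ⟨joinMap.comp pairs, fun x j => ?_, fun x hx => ?_⟩
  · exact (joinMap_apply_evalPt (pairs x) j).trans (h₁ x j)
  · have hrtuple : pairs ⟨rtuple x, hx⟩ =
        ⟨rtuple (s x), rtuple_mem_commonSourcePairs (h₀ x 0 1)⟩ :=
      Subtype.ext ((forall_permTuple_equivariant_iff _).1 hσ x hx)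
    simp only [ContinuousMap.comp_apply, hrtuple]
    exact joinMap_rtuple (pairs x)

lemma hasBidirPlanners_two_iff_hasSymPlanners (k : ℕ) :
    HasBidirPlanners X 2 k ↔ HasSymPlanners X 2 k := by
  simp only [HasBidirPlanners, HasSymPlanners, forall_permTuple_mem_iff]
  refine exists_congr fun U => and_congr_right' <| and_congr_right' <| and_congr_right' <|
    forall_congr' fun i => ⟨fun ⟨s, hs, hβ⟩ => exists_symSection_of_bidirSection s hs hβ,
      fun ⟨s, h₀, h₁, hσ⟩ => exists_bidirSection_of_symSection s h₀ h₁ hσ⟩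

end

theorem TCbeta_two_eq_TCsym_two_general (X : Type*) [TopologicalSpace X] :
    TCbeta X 2 = TCsym X 2 := by
  simp only [TCbeta, TCsym, hasBidirPlanners_two_iff_hasSymPlanners]

/-- For every path-connected space `X`,
`TC^β_2(X) = TC^Σ_2(X)`. -/
theorem TCbeta_two_eq_TCsym_two (X : Type*) [TopologicalSpace X] [PathConnectedSpace X] :
    TCbeta X 2 = TCsym X 2 :=
  TCbeta_two_eq_TCsym_two_general X
end
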